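/- arXiv:2101.07731 — 4 statements merged into one kernel-verified Lean document; each statement's English description precedes it below -/
import Mathlib

section
/- For every index 1 ≤ i ≤ n and every j with max(1, i−W) ≤ j ≤ min(n, i+W), the recursively defined quantities of the LB_TI algorithm satisfy L(i,j) ≤ d(q_i, c_j) ≤ U(i,j). -/
/-! Each step of the recursion moves one endpoint of a distance: from `d(q_{i-1}, c_j)` to
`d(q_i, c_j)`, or from `d(q_i, c_{j-1})` to `d(q_i, c_j)`. If the old distance lies in `[l, u]`
and the endpoint moves by `δ`, the triangle inequality puts the new distance in
`[max (l - δ) (δ - u), u + δ]`. Induction on `i`, treating the new top cell `j = i + W` of each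
row after the others, then shows that every cell of the band is such a sandwich. -/

section

variable {X : Type*} [PseudoMetricSpace X]

lemma dist_mem_bounds_of_move_left {x y z : X} {l u : ℝ}
    (h : l ≤ dist x z ∧ dist x z ≤ u) :
    max (l - dist x y) (dist x y - u) ≤ dist y z ∧ dist y z ≤ u + dist x y := by
  have hxz := dist_triangle x y z
  have hxy := dist_triangle_right x y z
  have hyz := dist_triangle_left y z x
  exact ⟨max_le (by linarith) (by linarith), by linarith⟩

lemma dist_mem_bounds_of_move_right {x y z : X} {l u : ℝ}
    (h : l ≤ dist x y ∧ dist x y ≤ u) :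
    max (l - dist y z) (dist y z - u) ≤ dist x z ∧ dist x z ≤ u + dist y z := by
  rw [dist_comm x y] at h
  rw [dist_comm x z]
  exact dist_mem_bounds_of_move_left h

end

theorem lbti_recursion_sound_general {X : Type*} [MetricSpace X]
    (n W : ℕ) (hW : 1 ≤ W)
    (q c : ℕ → X) (L U : ℕ → ℕ → ℝ)
    (hbase : ∀ j, 1 ≤ j → j ≤ min n (1 + W) →
      L 1 j = dist (q 1) (c j) ∧ U 1 j = dist (q 1) (c j))
    (hind : ∀ i j, 2 ≤ i → i ≤ n → max 1 (i - W) ≤ j → j ≤ min n (i + W - 1) →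
      L i j = max (L (i - 1) j - dist (q (i - 1)) (q i))
                  (dist (q (i - 1)) (q i) - U (i - 1) j) ∧
      U i j = U (i - 1) j + dist (q (i - 1)) (q i))
    (htop : ∀ i, 2 ≤ i → i ≤ n → i + W ≤ n →
      L i (i + W) = max (L i (i + W - 1) - dist (c (i + W - 1)) (c (i + W)))
                        (dist (c (i + W - 1)) (c (i + W)) - U i (i + W - 1)) ∧
      U i (i + W) = U i (i + W - 1) + dist (c (i + W - 1)) (c (i + W))) :
    ∀ i j, 1 ≤ i → i ≤ n → max 1 (i - W) ≤ j → j ≤ min n (i + W) →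
      L i j ≤ dist (q i) (c j) ∧ dist (q i) (c j) ≤ U i j := by
  intro i j hi
  induction i, hi using Nat.le_induction generalizing j with
  | base =>
    intro _ hj1 hj2
    obtain ⟨hL, hU⟩ := hbase j (by omega) hj2
    exact ⟨hL.le, hU.ge⟩
  | succ i hi ih =>
    intro hin
    have below_top : ∀ j, max 1 (i + 1 - W) ≤ j → j ≤ min n (i + W) →
        L (i + 1) j ≤ dist (q (i + 1)) (c j) ∧ dist (q (i + 1)) (c j) ≤ U (i + 1) j := by
      intro j hj1 hj2
      obtain ⟨hL, hU⟩ := hind (i + 1) j (by omega) hin hj1 (by omega)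
      rw [Nat.add_sub_cancel] at hL hU
      rw [hL, hU]
      exact dist_mem_bounds_of_move_left (ih j (by omega) (by omega) (by omega))
    intro hj1 hj2
    rcases (show j ≤ i + W ∨ j = i + 1 + W by omega) with hj | rfl
    · exact below_top j hj1 (by omega)
    · obtain ⟨hL, hU⟩ := htop (i + 1) (by omega) hin (by omega)
      rw [show i + 1 + W - 1 = i + W by omega] at hL hU
      rw [hL, hU]
      exact dist_mem_bounds_of_move_right (below_top (i + W) (by omega) (by omega))

/-- Correctness of the LB_TI recursion: for every index `1 ≤ i ≤ n` and every `j` with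
`max 1 (i - W) ≤ j ≤ min n (i + W)`, the recursively defined quantities `L i j` and `U i j`
of the LB_TI algorithm satisfy `L i j ≤ d(q i, c j) ≤ U i j`. -/
theorem lbti_recursion_sound {X : Type*} [MetricSpace X]
    (n W : ℕ) (hW : 1 ≤ W) (hn : 1 ≤ n)
    (q c : ℕ → X) (L U : ℕ → ℕ → ℝ)
    (hbase : ∀ j, 1 ≤ j → j ≤ min n (1 + W) →
      L 1 j = dist (q 1) (c j) ∧ U 1 j = dist (q 1) (c j))
    (hind : ∀ i j, 2 ≤ i → i ≤ n → max 1 (i - W) ≤ j → j ≤ min n (i + W - 1) →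
      L i j = max (L (i - 1) j - dist (q (i - 1)) (q i))
                  (dist (q (i - 1)) (q i) - U (i - 1) j) ∧
      U i j = U (i - 1) j + dist (q (i - 1)) (q i))
    (htop : ∀ i, 2 ≤ i → i ≤ n → i + W ≤ n →
      L i (i + W) = max (L i (i + W - 1) - dist (c (i + W - 1)) (c (i + W)))
                        (dist (c (i + W - 1)) (c (i + W)) - U i (i + W - 1)) ∧
      U i (i + W) = U i (i + W - 1) + dist (c (i + W - 1)) (c (i + W))) :
    ∀ i j, 1 ≤ i → i ≤ n → max 1 (i - W) ≤ j → j ≤ min n (i + W) →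
      L i j ≤ dist (q i) (c j) ∧ dist (q i) (c j) ≤ U i j :=
  lbti_recursion_sound_general n W hW q c L U hbase hind htop
end

section
/- Let Q = (q_1,…,q_n) and C = (c_1,…,c_n) be sequences in a metric space (X,d), and let W ≥ 0 be an integer. Then Σ_{i=1}^n min{ d(q_i, c_j) : 1 ≤ j ≤ n, |i − j| ≤ W } ≤ DTW_W(Q,C). -/
/-!
The first coordinate of a warping path climbs from `1` to `n` in steps of at most one, so the
path visits every query index `i`. At such a visit `(i, j)` the candidate index `j` lies in the
window of `i`, so the cost `d(q i, c j)` of that step dominates the window minimum of `i`;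
the remaining steps have nonnegative cost.
-/

/-- A window-`W` warping path for two series of length `n`: a sequence of index pairs
`p 1, …, p K` starting at `(1,1)`, ending at `(n,n)`, where each step moves right, up,
or diagonally up-right, and every visited pair `(i,j)` satisfies `|i - j| ≤ W`. -/
def IsWarpPath (n W K : ℕ) (p : ℕ → ℕ × ℕ) : Prop :=
  1 ≤ K ∧ p 1 = (1, 1) ∧ p K = (n, n) ∧
  (∀ k, 1 ≤ k → k < K →
    p (k + 1) = ((p k).1 + 1, (p k).2) ∨
    p (k + 1) = ((p k).1, (p k).2 + 1) ∨
    p (k + 1) = ((p k).1 + 1, (p k).2 + 1)) ∧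
  (∀ k, 1 ≤ k → k ≤ K → |((p k).1 : ℤ) - ((p k).2 : ℤ)| ≤ (W : ℤ))

theorem monotoneOn_Icc_of_le_succ {α : Type*} [Preorder α] {f : ℕ → α} {a b : ℕ}
    (hf : ∀ k, a ≤ k → k < b → f k ≤ f (k + 1)) : MonotoneOn f (Set.Icc a b) := by
  rintro i ⟨hai, -⟩ j ⟨-, hjb⟩ hij
  induction j, hij using Nat.le_induction with
  | base => exact le_rfl
  | succ j hij ih => exact (ih (by omega)).trans (hf j (hai.trans hij) (by omega))

theorem exists_mem_Icc_eq_of_le_add_one {f : ℕ → ℕ} {a b : ℕ} (hab : a ≤ b)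
    (hf : ∀ k, a ≤ k → k < b → f (k + 1) ≤ f k + 1) {y : ℕ} (hay : f a ≤ y) (hyb : y ≤ f b) :
    ∃ k ∈ Finset.Icc a b, f k = y := by
  induction b, hab using Nat.le_induction with
  | base => exact ⟨a, by simp, by omega⟩
  | succ b hab ih =>
    by_cases hy : y ≤ f b
    · obtain ⟨k, hk, hfk⟩ := ih (fun k hak hkb => hf k hak (by omega)) hy
      exact ⟨k, by simp only [Finset.mem_Icc] at hk ⊢; omega, hfk⟩
    · have := hf b hab (by omega)
      exact ⟨b + 1, by simp; omega, by omega⟩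

namespace IsWarpPath

variable {n W K : ℕ} {p : ℕ → ℕ × ℕ}

theorem apply_one (hp : IsWarpPath n W K p) : p 1 = (1, 1) := hp.2.1

theorem apply_length (hp : IsWarpPath n W K p) : p K = (n, n) := hp.2.2.1

theorem fst_le_fst_succ (hp : IsWarpPath n W K p) {k : ℕ} (hk : 1 ≤ k) (hkK : k < K) :
    (p k).1 ≤ (p (k + 1)).1 := by
  rcases hp.2.2.2.1 k hk hkK with h | h | h <;> simp [h]

theorem fst_succ_le_fst_add_one (hp : IsWarpPath n W K p) {k : ℕ} (hk : 1 ≤ k) (hkK : k < K) :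
    (p (k + 1)).1 ≤ (p k).1 + 1 := by
  rcases hp.2.2.2.1 k hk hkK with h | h | h <;> simp [h]

theorem snd_le_snd_succ (hp : IsWarpPath n W K p) {k : ℕ} (hk : 1 ≤ k) (hkK : k < K) :
    (p k).2 ≤ (p (k + 1)).2 := by
  rcases hp.2.2.2.1 k hk hkK with h | h | h <;> simp [h]

theorem fst_mem_Icc (hp : IsWarpPath n W K p) {k : ℕ} (hk : k ∈ Finset.Icc 1 K) :
    (p k).1 ∈ Finset.Icc 1 n := by
  have hmono : MonotoneOn (fun k => (p k).1) (Set.Icc 1 K) :=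
    monotoneOn_Icc_of_le_succ fun _ hk hkK => hp.fst_le_fst_succ hk hkK
  simpa [hp.apply_one, hp.apply_length] using hmono.mapsTo_Icc (by simpa using hk)

theorem snd_mem_Icc (hp : IsWarpPath n W K p) {k : ℕ} (hk : k ∈ Finset.Icc 1 K) :
    (p k).2 ∈ Finset.Icc 1 n := by
  have hmono : MonotoneOn (fun k => (p k).2) (Set.Icc 1 K) :=
    monotoneOn_Icc_of_le_succ fun _ hk hkK => hp.snd_le_snd_succ hk hkK
  simpa [hp.apply_one, hp.apply_length] using hmono.mapsTo_Icc (by simpa using hk)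

theorem image_fst (hp : IsWarpPath n W K p) :
    (Finset.Icc 1 K).image (fun k => (p k).1) = Finset.Icc 1 n := by
  refine subset_antisymm (Finset.image_subset_iff.2 fun k hk => hp.fst_mem_Icc hk) fun i hi => ?_
  rw [Finset.mem_Icc] at hi
  obtain ⟨k, hk, rfl⟩ := exists_mem_Icc_eq_of_le_add_one (f := fun k => (p k).1) hp.1
    (fun k hk hkK => hp.fst_succ_le_fst_add_one hk hkK)
    (by simpa [hp.apply_one] using hi.1) (by simpa [hp.apply_length] using hi.2)
  exact Finset.mem_image_of_mem _ hk

theorem abs_sub_le (hp : IsWarpPath n W K p) {k : ℕ} (hk : k ∈ Finset.Icc 1 K) :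
    |((p k).1 : ℤ) - ((p k).2 : ℤ)| ≤ (W : ℤ) := by
  rw [Finset.mem_Icc] at hk
  exact hp.2.2.2.2 k hk.1 hk.2

end IsWarpPath

theorem sInf_window_dist_le {X : Type*} [PseudoMetricSpace X] (q c : ℕ → X) {n W i j : ℕ}
    (hj : j ∈ Finset.Icc 1 n) (hij : |(i : ℤ) - (j : ℤ)| ≤ (W : ℤ)) :
    sInf {x : ℝ | ∃ j, 1 ≤ j ∧ j ≤ n ∧ |(i : ℤ) - (j : ℤ)| ≤ (W : ℤ) ∧
      x = dist (q i) (c j)} ≤ dist (q i) (c j) := by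
  rw [Finset.mem_Icc] at hj
  refine csInf_le ⟨0, ?_⟩ ⟨j, hj.1, hj.2, hij, rfl⟩
  rintro x ⟨j, -, -, -, rfl⟩
  exact dist_nonneg

theorem lb_ad_le_dtw_general {X : Type*} [MetricSpace X] (n W : ℕ)
    (q c : ℕ → X) (K : ℕ) (p : ℕ → ℕ × ℕ) (hp : IsWarpPath n W K p) :
    ∑ i ∈ Finset.Icc 1 n,
        sInf {x : ℝ | ∃ j, 1 ≤ j ∧ j ≤ n ∧ |(i : ℤ) - (j : ℤ)| ≤ (W : ℤ) ∧
          x = dist (q i) (c j)} ≤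
      ∑ k ∈ Finset.Icc 1 K, dist (q (p k).1) (c (p k).2) := by
  set m : ℕ → ℝ := fun i => sInf {x : ℝ | ∃ j, 1 ≤ j ∧ j ≤ n ∧ |(i : ℤ) - (j : ℤ)| ≤ (W : ℤ) ∧
    x = dist (q i) (c j)}
  have hm_nonneg : ∀ i, 0 ≤ m i := fun i =>
    Real.sInf_nonneg fun x ⟨j, _, _, _, hx⟩ => hx ▸ dist_nonneg
  calc ∑ i ∈ Finset.Icc 1 n, m i
      = ∑ i ∈ (Finset.Icc 1 K).image (fun k => (p k).1), m i := by rw [hp.image_fst]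
    _ ≤ ∑ k ∈ Finset.Icc 1 K, m (p k).1 :=
      Finset.sum_image_le_of_nonneg fun i _ => hm_nonneg i
    _ ≤ ∑ k ∈ Finset.Icc 1 K, dist (q (p k).1) (c (p k).2) :=
      Finset.sum_le_sum fun k hk => sInf_window_dist_le q c (hp.snd_mem_Icc hk) (hp.abs_sub_le hk)

/-- LB_AD is a lower bound of the window-`W` DTW distance: the sum over all query points
`q i` of the minimum distance from `q i` to the candidate points within its window is at
most the cost of every window-`W` warping path (hence at most `DTW_W(Q,C)`, the minimum
of the costs over all such paths). -/
theorem lb_ad_le_dtw {X : Type*} [MetricSpace X] (n W : ℕ) (hn : 1 ≤ n)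
    (q c : ℕ → X) (K : ℕ) (p : ℕ → ℕ × ℕ) (hp : IsWarpPath n W K p) :
    ∑ i ∈ Finset.Icc 1 n,
        sInf {x : ℝ | ∃ j, 1 ≤ j ∧ j ≤ n ∧ |(i : ℤ) - (j : ℤ)| ≤ (W : ℤ) ∧
          x = dist (q i) (c j)} ≤
      ∑ k ∈ Finset.Icc 1 K, dist (q (p k).1) (c (p k).2) :=
  lb_ad_le_dtw_general n W q c K p hp
end

section
/- Let Q = (q_1,…,q_n) and C = (c_1,…,c_n) be sequences in a metric space (X,d), let W ≥ 0 be an integer, and let ℓ : {1,…,n} → ℝ be any function such that ℓ(j) ≤ d(q_i, c_j) for every pair (i,j) with |i − j| ≤ W. Then Σ_{j=1}^n ℓ(j) ≤ DTW_W(Q,C). -/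
theorem Nat.intermediate_value_Icc {u : ℕ → ℕ} {a b : ℕ} (hab : a ≤ b)
    (hu : ∀ k ∈ Set.Ico a b, u (k + 1) ≤ u k + 1) :
    Set.Icc (u a) (u b) ⊆ u '' Set.Icc a b := by
  induction b, hab using Nat.le_induction with
  | base => simp
  | succ b hab ih =>
    intro j ⟨hj_lo, hj_hi⟩
    rcases le_or_gt j (u b) with hj | hj
    · obtain ⟨k, hk, rfl⟩ :=
        ih (fun k hk ↦ hu k ⟨hk.1, hk.2.trans (Nat.lt_succ_self b)⟩) ⟨hj_lo, hj⟩
      exact ⟨k, ⟨hk.1, hk.2.trans (Nat.le_succ b)⟩, rfl⟩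
    · have hstep := hu b ⟨hab, Nat.lt_succ_self b⟩
      exact ⟨b + 1, ⟨hab.trans (Nat.le_succ b), le_rfl⟩, by omega⟩

theorem Finset.sum_le_sum_of_forall_exists_fiber {ι κ M : Type*} [DecidableEq ι]
    [AddCommMonoid M] [PartialOrder M] [IsOrderedAddMonoid M]
    {s : Finset ι} {t : Finset κ} (π : κ → ι) {f : ι → M} {g : κ → M}
    (hg : ∀ k ∈ t, 0 ≤ g k) (h : ∀ i ∈ s, ∃ k ∈ t, π k = i ∧ f i ≤ g k) :
    ∑ i ∈ s, f i ≤ ∑ k ∈ t, g k := by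
  calc ∑ i ∈ s, f i
      ≤ ∑ i ∈ s, ∑ k ∈ t with π k = i, g k := by
        refine Finset.sum_le_sum fun i hi ↦ ?_
        obtain ⟨k, hk, hπk, hfg⟩ := h i hi
        exact hfg.trans <| Finset.single_le_sum (fun k hk ↦ hg k (Finset.mem_filter.1 hk).1)
          (Finset.mem_filter.2 ⟨hk, hπk⟩)
    _ ≤ ∑ k ∈ t, g k :=
        Finset.sum_fiberwise_le_sum_of_sum_fiber_nonneg fun i _ ↦
          Finset.sum_nonneg fun k hk ↦ hg k (Finset.mem_filter.1 hk).1

namespace IsWarpPath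

variable {n W K : ℕ} {p : ℕ → ℕ × ℕ}

theorem le_succ (hp : IsWarpPath n W K p) {k : ℕ} (hk₁ : 1 ≤ k) (hkK : k < K) :
    p k ≤ p (k + 1) := by
  rcases hp.2.2.2.1 k hk₁ hkK with h | h | h <;> simp [h, Prod.le_def]

theorem snd_succ_le (hp : IsWarpPath n W K p) {k : ℕ} (hk₁ : 1 ≤ k) (hkK : k < K) :
    (p (k + 1)).2 ≤ (p k).2 + 1 := by
  rcases hp.2.2.2.1 k hk₁ hkK with h | h | h <;> simp [h]

theorem monotoneOn (hp : IsWarpPath n W K p) : MonotoneOn p (Set.Icc 1 K) :=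
  monotoneOn_of_le_add_one Set.ordConnected_Icc fun _ _ hk hk' ↦ hp.le_succ hk.1 hk'.2

theorem mem_Icc (hp : IsWarpPath n W K p) {k : ℕ} (hk : k ∈ Set.Icc 1 K) :
    p k ∈ Set.Icc (1, 1) (n, n) := by
  have hK : K ∈ Set.Icc 1 K := ⟨hp.1, le_rfl⟩
  constructor
  · simpa [hp.2.1] using hp.monotoneOn ⟨le_rfl, hp.1⟩ hk hk.1
  · simpa [hp.2.2.1] using hp.monotoneOn hk hK hk.2

theorem exists_snd_eq (hp : IsWarpPath n W K p) {j : ℕ} (hj : j ∈ Set.Icc 1 n) :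
    ∃ k ∈ Set.Icc 1 K, (p k).2 = j :=
  Nat.intermediate_value_Icc (u := fun k ↦ (p k).2) hp.1
    (fun _ hk ↦ hp.snd_succ_le hk.1 hk.2) (by simpa [hp.2.1, hp.2.2.1] using hj)

theorem abs_fst_sub_snd_le (hp : IsWarpPath n W K p) {k : ℕ} (hk : k ∈ Set.Icc 1 K) :
    |((p k).1 : ℤ) - (p k).2| ≤ W :=
  hp.2.2.2.2 k hk.1 hk.2

end IsWarpPath

theorem per_point_lb_le_dtw_general {X : Type*} [MetricSpace X] (n W : ℕ)
    (q c : ℕ → X) (ℓ : ℕ → ℝ)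
    (hℓ : ∀ i j, 1 ≤ i → i ≤ n → 1 ≤ j → j ≤ n → |(i : ℤ) - (j : ℤ)| ≤ (W : ℤ) →
      ℓ j ≤ dist (q i) (c j))
    (K : ℕ) (p : ℕ → ℕ × ℕ) (hp : IsWarpPath n W K p) :
    ∑ j ∈ Finset.Icc 1 n, ℓ j ≤ ∑ k ∈ Finset.Icc 1 K, dist (q (p k).1) (c (p k).2) := by
  refine Finset.sum_le_sum_of_forall_exists_fiber (fun k ↦ (p k).2)
    (fun _ _ ↦ dist_nonneg) fun j hj ↦ ?_
  obtain ⟨k, hk, hkj⟩ := hp.exists_snd_eq (by simpa using hj)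
  obtain ⟨⟨hi₁, hj₁⟩, ⟨hin, hjn⟩⟩ := hp.mem_Icc hk
  refine ⟨k, Finset.mem_Icc.2 hk, hkj, ?_⟩
  subst hkj
  exact hℓ _ _ hi₁ hin hj₁ hjn (hp.abs_fst_sub_snd_le hk)

/-- General soundness of per-point lower-bound filters: if `ℓ j ≤ d(q i, c j)` for every
pair `(i, j)` inside the window (`|i - j| ≤ W`), then `∑ j, ℓ j` is at most the cost of
every window-`W` warping path, hence at most `DTW_W(Q,C)`. -/
theorem per_point_lb_le_dtw {X : Type*} [MetricSpace X] (n W : ℕ) (hn : 1 ≤ n)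
    (q c : ℕ → X) (ℓ : ℕ → ℝ)
    (hℓ : ∀ i j, 1 ≤ i → i ≤ n → 1 ≤ j → j ≤ n → |(i : ℤ) - (j : ℤ)| ≤ (W : ℤ) →
      ℓ j ≤ dist (q i) (c j))
    (K : ℕ) (p : ℕ → ℕ × ℕ) (hp : IsWarpPath n W K p) :
    ∑ j ∈ Finset.Icc 1 n, ℓ j ≤ ∑ k ∈ Finset.Icc 1 K, dist (q (p k).1) (c (p k).2) :=
  per_point_lb_le_dtw_general n W q c ℓ hℓ K p hp
end

section
/- Let S_1,…,S_K be finite nonempty subsets of ℝ^D, let S = S_1 ∪ … ∪ S_K, and let c ∈ ℝ^D. Then bd(c, S) ≤ min_{1 ≤ k ≤ K} bd(c, S_k) ≤ min_{s ∈ S} ‖c − s‖. -/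
/-- The box distance `bd(c, S)`: the Euclidean distance from the point `c` to the
axis-aligned bounding box of the set `S ⊆ ℝ^D`. -/
noncomputable def boxDist {D : ℕ} (c : EuclideanSpace ℝ (Fin D))
    (S : Set (EuclideanSpace ℝ (Fin D))) : ℝ :=
  Real.sqrt (∑ p : Fin D,
    max (c p - sSup ((fun s => s p) '' S)) (max (sInf ((fun s => s p) '' S) - c p) 0) ^ 2)

open Set Bornology

/-- For `l ≤ u`, the distance from `x` to `[l, u]`; `boxDist` is the `ℓ²` norm of these gaps. -/
def intervalGap (l u x : ℝ) : ℝ := max (x - u) (max (l - x) 0)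

lemma intervalGap_nonneg (l u x : ℝ) : 0 ≤ intervalGap l u x :=
  (le_max_right _ _).trans (le_max_right _ _)

lemma intervalGap_anti {l l' u u' : ℝ} (hl : l' ≤ l) (hu : u ≤ u') (x : ℝ) :
    intervalGap l' u' x ≤ intervalGap l u x :=
  max_le_max (by linarith) (max_le_max (by linarith) le_rfl)

lemma intervalGap_le_abs_sub {l u x y : ℝ} (hl : l ≤ y) (hu : y ≤ u) :
    intervalGap l u x ≤ |x - y| :=
  max_le (by linarith [le_abs_self (x - y)])
    (max_le (by linarith [neg_abs_le (x - y)]) (abs_nonneg _))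

section BoxDist

variable {D : ℕ} (c : EuclideanSpace ℝ (Fin D))

lemma boxDist_eq (S : Set (EuclideanSpace ℝ (Fin D))) :
    boxDist c S = Real.sqrt (∑ p : Fin D,
      intervalGap (sInf ((fun s => s p) '' S)) (sSup ((fun s => s p) '' S)) (c p) ^ 2) :=
  rfl

lemma boxDist_nonneg (S : Set (EuclideanSpace ℝ (Fin D))) : 0 ≤ boxDist c S :=
  Real.sqrt_nonneg _

lemma Bornology.IsBounded.image_coord {S : Set (EuclideanSpace ℝ (Fin D))} (hS : IsBounded S)
    (p : Fin D) : IsBounded ((fun s => s p) '' S) :=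
  (EuclideanSpace.proj p : EuclideanSpace ℝ (Fin D) →L[ℝ] ℝ).lipschitz.isBounded_image hS

/-- Shrinking a set shrinks its bounding box, which can only move it away from `c`. -/
lemma boxDist_le_boxDist_of_subset {S T : Set (EuclideanSpace ℝ (Fin D))} (hST : S ⊆ T)
    (hS : S.Nonempty) (hT : IsBounded T) : boxDist c T ≤ boxDist c S := by
  rw [boxDist_eq, boxDist_eq]
  gcongr with p
  · exact intervalGap_nonneg _ _ _
  have hne : ((fun s => s p) '' S).Nonempty := hS.image _
  have hTp := hT.image_coord p
  exact intervalGap_anti (csInf_le_csInf hTp.bddBelow hne (image_mono hST))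
    (csSup_le_csSup hTp.bddAbove hne (image_mono hST)) _

/-- Every point of `S` lies in its bounding box. -/
lemma boxDist_le_norm_sub {S : Set (EuclideanSpace ℝ (Fin D))} (hS : IsBounded S)
    {s : EuclideanSpace ℝ (Fin D)} (hs : s ∈ S) : boxDist c S ≤ ‖c - s‖ := by
  rw [boxDist_eq, EuclideanSpace.norm_eq]
  gcongr with p
  · exact intervalGap_nonneg _ _ _
  have hmem : s p ∈ (fun s => s p) '' S := mem_image_of_mem _ hs
  have hSp := hS.image_coord p
  rw [PiLp.sub_apply, Real.norm_eq_abs]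
  exact intervalGap_le_abs_sub (csInf_le hSp.bddBelow hmem) (le_csSup hSp.bddAbove hmem)

end BoxDist

/-- Key insight of LB_PC: for finite nonempty sets `S_1, …, S_K ⊆ ℝ^D` with union `S`,
the single-box bound `bd(c, S)` is at most the minimum over the clusters of the box
distances `bd(c, S_k)`, which in turn is at most the true minimum point distance
`min_{s ∈ S} ‖c - s‖`. -/
theorem boxDist_union_le_min_boxDist_le_min_dist {D K : ℕ} (hK : 1 ≤ K)
    (S : Fin K → Set (EuclideanSpace ℝ (Fin D)))
    (hfin : ∀ k, (S k).Finite) (hne : ∀ k, (S k).Nonempty)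
    (c : EuclideanSpace ℝ (Fin D)) :
    boxDist c (⋃ k, S k) ≤ sInf {x : ℝ | ∃ k, x = boxDist c (S k)} ∧
    sInf {x : ℝ | ∃ k, x = boxDist c (S k)} ≤
      sInf {x : ℝ | ∃ s ∈ ⋃ k, S k, x = ‖c - s‖} := by
  have k₀ : Fin K := ⟨0, hK⟩
  obtain ⟨s₀, hs₀⟩ := hne k₀
  have hbdd : BddBelow {x : ℝ | ∃ k, x = boxDist c (S k)} :=
    ⟨0, by rintro _ ⟨k, rfl⟩; exact boxDist_nonneg c _⟩
  constructor
  · refine le_csInf ⟨_, k₀, rfl⟩ ?_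
    rintro _ ⟨k, rfl⟩
    exact boxDist_le_boxDist_of_subset c (subset_iUnion S k) (hne k)
      (finite_iUnion hfin).isBounded
  · refine le_csInf ⟨_, s₀, mem_iUnion.2 ⟨k₀, hs₀⟩, rfl⟩ ?_
    rintro _ ⟨s, hs, rfl⟩
    obtain ⟨k, hk⟩ := mem_iUnion.1 hs
    exact (csInf_le hbdd ⟨k, rfl⟩).trans (boxDist_le_norm_sub c (hfin k).isBounded hk)
end
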